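/- Let τ ∈ ℝ, let Ω ⊆ ℝ² be open, and let u, v : Ω → ℝ be smooth functions with v_x² + v_y² < 1 satisfying the twin relations u_x = v_y/ω̃ − τy and u_y = −v_x/ω̃ + τx on Ω, where ω̃ = (1 − v_x² − v_y²)^(1/2). With α = u_x + τy, β = u_y − τx, ω = (1 + α² + β²)^(1/2), ν = 1/ω, K̃ = (v_xy² − v_xx v_yy)/ω̃⁴, and ‖∇ν‖² = [(1+β²)(∂_x ν)² − 2αβ (∂_x ν)(∂_y ν) + (1+α²)(∂_y ν)²]/ω², the inequality ‖∇ν‖²/ν⁴ ≤ (4τ² + 2K̃)(1 − ν²) holds on Ω. -/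

import Mathlib

open Filter Topology

set_option maxHeartbeats 1000000


/-- Partial derivative in the `x` direction. -/
noncomputable def px (f : ℝ × ℝ → ℝ) (p : ℝ × ℝ) : ℝ := fderiv ℝ f p (1, 0)

/-- Partial derivative in the `y` direction. -/
noncomputable def py (f : ℝ × ℝ → ℝ) (p : ℝ × ℝ) : ℝ := fderiv ℝ f p (0, 1)

/-- `α = u_x + τ y`. -/
noncomputable def alph (τ : ℝ) (u : ℝ × ℝ → ℝ) (p : ℝ × ℝ) : ℝ := px u p + τ * p.2

/-- `β = u_y − τ x`. -/
noncomputable def bet (τ : ℝ) (u : ℝ × ℝ → ℝ) (p : ℝ × ℝ) : ℝ := py u p - τ * p.1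

/-- Riemannian area element `ω = (1 + α² + β²)^(1/2)` of the graph of `u`. -/
noncomputable def omeg (τ : ℝ) (u : ℝ × ℝ → ℝ) (p : ℝ × ℝ) : ℝ :=
  Real.sqrt (1 + (alph τ u p) ^ 2 + (bet τ u p) ^ 2)

/-- Lorentzian area element `ω̃ = (1 − v_x² − v_y²)^(1/2)` of the graph of `v`. -/
noncomputable def omegT (v : ℝ × ℝ → ℝ) (p : ℝ × ℝ) : ℝ :=
  Real.sqrt (1 - (px v p) ^ 2 - (py v p) ^ 2)

/-- Angle function `ν = 1/ω` of the graph of `u`, as a function on `ℝ²`. -/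
noncomputable def nuF (τ : ℝ) (u : ℝ × ℝ → ℝ) : ℝ × ℝ → ℝ := fun q => 1 / omeg τ u q

/-- Gauss curvature of the minimal graph of `u` in `Nil₃(τ)`, via the Gauss
equation `K = det A + τ² − 4τ²ν²` in coordinates. -/
noncomputable def gaussK (τ : ℝ) (u : ℝ × ℝ → ℝ) (p : ℝ × ℝ) : ℝ :=
  ((px (px u) p + 2 * τ * alph τ u p * bet τ u p) *
      (py (py u) p - 2 * τ * alph τ u p * bet τ u p) -
    (py (px u) p + τ * ((bet τ u p) ^ 2 - (alph τ u p) ^ 2)) ^ 2) / (omeg τ u p) ^ 4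
    + τ ^ 2 - 4 * τ ^ 2 * (nuF τ u p) ^ 2

/-- Gauss curvature `K̃ = (v_xy² − v_xx v_yy)/ω̃⁴` of the spacelike graph of `v`. -/
noncomputable def gaussKT (v : ℝ × ℝ → ℝ) (p : ℝ × ℝ) : ℝ :=
  ((py (px v) p) ^ 2 - px (px v) p * py (py v) p) / (omegT v p) ^ 4

/-- Squared norm of the intrinsic gradient of the angle function `ν` with
respect to the induced metric `[[1+α², αβ],[αβ, 1+β²]]` of the graph of `u`. -/
noncomputable def gradNuSq (τ : ℝ) (u : ℝ × ℝ → ℝ) (p : ℝ × ℝ) : ℝ :=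
  ((1 + (bet τ u p) ^ 2) * (px (nuF τ u) p) ^ 2
      - 2 * alph τ u p * bet τ u p * px (nuF τ u) p * py (nuF τ u) p
      + (1 + (alph τ u p) ^ 2) * (py (nuF τ u) p) ^ 2) / (omeg τ u p) ^ 2

lemma final_ineq (a b R S T W τ G ν KT α β ω νx νy : ℝ)
    (hab : a^2 + b^2 < 1) (hW : 0 < W) (hW2 : W^2 = 1 - a^2 - b^2)
    (hE : R*(W^2+a^2) + 2*a*b*S + T*(W^2+b^2) = 2*τ*W^3)
    (hα : α = b/W) (hβ : β = -(a/W)) (hω : ω = 1/W) (hν : ν = W)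
    (hνx : νx = -((a*R+b*S)/W)) (hνy : νy = -((a*S+b*T)/W))
    (hKT : KT = (S^2 - R*T)/W^4)
    (hG : G = ((1+β^2)*νx^2 - 2*α*β*νx*νy + (1+α^2)*νy^2)/ω^2) :
    G / ν^4 ≤ (4*τ^2 + 2*KT)*(1-ν^2) := by
  have hWne : W ≠ 0 := hW.ne'
  have e1 : G / ν^4 = ((W^2+a^2)*(a*R+b*S)^2 + 2*a*b*(a*R+b*S)*(a*S+b*T)
      + (W^2+b^2)*(a*S+b*T)^2)/W^6 := by
    rw [hG, hν, hα, hβ, hω, hνx, hνy]; field_simp; ring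
  have e2 : (4*τ^2 + 2*KT)*(1-ν^2)
      = ((2*τ*W^3)^2 + 2*(S^2-R*T)*W^2)*(1-W^2)/W^6 := by
    rw [hKT, hν]; field_simp; ring
  rw [e1, e2]
  gcongr ?_ / _
  rw [← hE]
  have hw : (0:ℝ) < 1 - a^2 - b^2 := by linarith
  rw [hW2]
  nlinarith [mul_nonneg hw.le (sq_nonneg (a*(b*R-a*S)+b*(b*S-a*T))),
    mul_nonneg (mul_nonneg hw.le hw.le) (sq_nonneg (b*R-a*S)),
    mul_nonneg (mul_nonneg hw.le hw.le) (sq_nonneg (b*S-a*T))]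

/-- for dual graphs, `‖∇ν‖²/ν⁴ ≤ (4τ² + 2K̃)(1 − ν²)`, where `ν`
is the angle function of the minimal graph in `Nil₃(τ)` and `K̃` is the Gauss
curvature of the dual spacelike CMC-`τ` graph in `𝕃³`. -/
theorem grad_angle_function_estimate (τ : ℝ) (Ω : Set (ℝ × ℝ)) (hΩ : IsOpen Ω)
    (u v : ℝ × ℝ → ℝ)
    (hu : ContDiffOn ℝ (⊤ : ℕ∞) u Ω) (hv : ContDiffOn ℝ (⊤ : ℕ∞) v Ω)
    (hsp : ∀ p ∈ Ω, (px v p) ^ 2 + (py v p) ^ 2 < 1)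
    (htwinx : ∀ p ∈ Ω, px u p = py v p / omegT v p - τ * p.2)
    (htwiny : ∀ p ∈ Ω, py u p = -px v p / omegT v p + τ * p.1) :
    ∀ p ∈ Ω,
      gradNuSq τ u p / (nuF τ u p) ^ 4
        ≤ (4 * τ ^ 2 + 2 * gaussKT v p) * (1 - (nuF τ u p) ^ 2) := by
  -- pointwise facts valid on all of Ω
  have hWpos : ∀ q ∈ Ω, 0 < omegT v q := by
    intro q hq
    have h := hsp q hq
    exact Real.sqrt_pos.mpr (by nlinarith)
  have hWsq : ∀ q ∈ Ω, (omegT v q) ^ 2 = 1 - px v q ^ 2 - py v q ^ 2 := by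
    intro q hq
    have h := hsp q hq
    exact Real.sq_sqrt (by nlinarith)
  have halph : ∀ q ∈ Ω, alph τ u q = py v q / omegT v q := by
    intro q hq; rw [alph, htwinx q hq]; ring
  have hbet : ∀ q ∈ Ω, bet τ u q = -(px v q / omegT v q) := by
    intro q hq; rw [bet, htwiny q hq]; ring
  have homeg : ∀ q ∈ Ω, omeg τ u q = 1 / omegT v q := by
    intro q hq
    have hW := hWpos q hq
    have hW2 := hWsq q hq
    rw [omeg, halph q hq, hbet q hq]
    have h : 1 + (py v q / omegT v q) ^ 2 + (-(px v q / omegT v q)) ^ 2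
        = (1 / omegT v q) ^ 2 := by
      field_simp
      linarith [hW2]
    rw [h]
    exact Real.sqrt_sq (by positivity)
  have hnuq : ∀ q ∈ Ω, nuF τ u q = omegT v q := by
    intro q hq
    have hW := hWpos q hq
    show 1 / omeg τ u q = omegT v q
    rw [homeg q hq, one_div_one_div]
  intro p hp
  have hmem : Ω ∈ 𝓝 p := hΩ.mem_nhds hp
  have hab : (px v p) ^ 2 + (py v p) ^ 2 < 1 := hsp p hp
  have hWp : 0 < omegT v p := hWpos p hp
  have hWne : omegT v p ≠ 0 := hWp.ne'
  have hW2 : (omegT v p) ^ 2 = 1 - px v p ^ 2 - py v p ^ 2 := hWsq p hp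
  -- second derivative of v
  have hvC : ContDiffAt ℝ 2 v p := (hv.contDiffAt hmem).of_le (WithTop.coe_le_coe.mpr (le_top : (2:ℕ∞) ≤ ⊤))
  have hv' : ∀ᶠ q in 𝓝 p, HasFDerivAt v (fderiv ℝ v q) q := by
    filter_upwards [hmem] with q hq
    exact ((hv.contDiffAt (hΩ.mem_nhds hq)).differentiableAt (by simp)).hasFDerivAt
  have hdfv : DifferentiableAt ℝ (fderiv ℝ v) p :=
    (hvC.fderiv_right (m := 1) (by norm_num)).differentiableAt one_ne_zero
  have hf'' : HasFDerivAt (fderiv ℝ v) (fderiv ℝ (fderiv ℝ v) p) p := hdfv.hasFDerivAt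
  set F := fderiv ℝ (fderiv ℝ v) p with hFdef
  have hsymm : ∀ x y : ℝ × ℝ, F x y = F y x :=
    second_derivative_symmetric_of_eventually hv' hf''
  set L10 := ContinuousLinearMap.apply ℝ ℝ (((1:ℝ), (0:ℝ)) : ℝ × ℝ) with hL10
  set L01 := ContinuousLinearMap.apply ℝ ℝ (((0:ℝ), (1:ℝ)) : ℝ × ℝ) with hL01
  have hpx : HasFDerivAt (px v) (L10.comp F) p :=
    ((L10.hasFDerivAt.comp p hf'')).congr_of_eventuallyEq
      (Filter.Eventually.of_forall fun q => rfl)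
  have hpy : HasFDerivAt (py v) (L01.comp F) p :=
    ((L01.hasFDerivAt.comp p hf'')).congr_of_eventuallyEq
      (Filter.Eventually.of_forall fun q => rfl)
  -- derivative of omegT v
  have hinner : HasFDerivAt (fun q => 1 - px v q ^ 2 - py v q ^ 2)
      ((0 - (px v p • (L10.comp F) + px v p • (L10.comp F)))
        - (py v p • (L01.comp F) + py v p • (L01.comp F))) p := by
    have h := ((hasFDerivAt_const (1:ℝ) p).sub (hpx.mul hpx)).sub (hpy.mul hpy)
    exact h.congr_of_eventuallyEq (Filter.Eventually.of_forall fun q => by simp only [Pi.sub_apply, Pi.mul_apply]; ring)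
  have hin0 : (1 - px v p ^ 2 - py v p ^ 2) ≠ 0 := by nlinarith
  have hsq := hinner.sqrt hin0
  have homegaT : HasFDerivAt (omegT v)
      ((1 / (2 * Real.sqrt (1 - px v p ^ 2 - py v p ^ 2))) •
        ((0 - (px v p • (L10.comp F) + px v p • (L10.comp F)))
          - (py v p • (L01.comp F) + py v p • (L01.comp F)))) p :=
    hsq.congr_of_eventuallyEq (Filter.Eventually.of_forall fun q => rfl)

  have hdo : DifferentiableAt ℝ (omegT v) p := homegaT.differentiableAt
  have hWrfl : Real.sqrt (1 - px v p ^ 2 - py v p ^ 2) = omegT v p := rfl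
  -- evaluations of the derivative of omegT v
  have hDx : fderiv ℝ (omegT v) p ((1:ℝ), (0:ℝ))
      = -((px v p * F ((1:ℝ),(0:ℝ)) ((1:ℝ),(0:ℝ)) + py v p * F ((1:ℝ),(0:ℝ)) ((0:ℝ),(1:ℝ))) / omegT v p) := by
    rw [homegaT.fderiv]
    simp only [ContinuousLinearMap.smul_apply, ContinuousLinearMap.sub_apply,
      ContinuousLinearMap.add_apply, ContinuousLinearMap.comp_apply,
      ContinuousLinearMap.apply_apply, ContinuousLinearMap.zero_apply,
      ContinuousLinearMap.coe_smul', Pi.smul_apply, smul_eq_mul, hWrfl, hL10, hL01]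
    field_simp
    ring
  have hDy : fderiv ℝ (omegT v) p ((0:ℝ), (1:ℝ))
      = -((px v p * F ((0:ℝ),(1:ℝ)) ((1:ℝ),(0:ℝ)) + py v p * F ((0:ℝ),(1:ℝ)) ((0:ℝ),(1:ℝ))) / omegT v p) := by
    rw [homegaT.fderiv]
    simp only [ContinuousLinearMap.smul_apply, ContinuousLinearMap.sub_apply,
      ContinuousLinearMap.add_apply, ContinuousLinearMap.comp_apply,
      ContinuousLinearMap.apply_apply, ContinuousLinearMap.zero_apply,
      ContinuousLinearMap.coe_smul', Pi.smul_apply, smul_eq_mul, hWrfl, hL10, hL01]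
    field_simp
    ring
  -- ν and its derivatives
  have hnueq : nuF τ u =ᶠ[𝓝 p] omegT v := by
    filter_upwards [hmem] with q hq
    exact hnuq q hq
  have hnx : px (nuF τ u) p
      = -((px v p * F ((1:ℝ),(0:ℝ)) ((1:ℝ),(0:ℝ)) + py v p * F ((1:ℝ),(0:ℝ)) ((0:ℝ),(1:ℝ))) / omegT v p) := by
    show fderiv ℝ (nuF τ u) p ((1:ℝ),(0:ℝ)) = _
    rw [hnueq.fderiv_eq, hDx]
  have hny : py (nuF τ u) p
      = -((px v p * F ((1:ℝ),(0:ℝ)) ((0:ℝ),(1:ℝ)) + py v p * F ((0:ℝ),(1:ℝ)) ((0:ℝ),(1:ℝ))) / omegT v p) := by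
    show fderiv ℝ (nuF τ u) p ((0:ℝ),(1:ℝ)) = _
    rw [hnueq.fderiv_eq, hDy, hsymm ((0:ℝ),(1:ℝ)) ((1:ℝ),(0:ℝ))]
  -- second derivative of u
  have huC : ContDiffAt ℝ 2 u p := (hu.contDiffAt hmem).of_le (WithTop.coe_le_coe.mpr (le_top : (2:ℕ∞) ≤ ⊤))
  have hu' : ∀ᶠ q in 𝓝 p, HasFDerivAt u (fderiv ℝ u q) q := by
    filter_upwards [hmem] with q hq
    exact ((hu.contDiffAt (hΩ.mem_nhds hq)).differentiableAt (by simp)).hasFDerivAt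
  have hdfu : DifferentiableAt ℝ (fderiv ℝ u) p :=
    (huC.fderiv_right (m := 1) (by norm_num)).differentiableAt one_ne_zero
  have hu'' : HasFDerivAt (fderiv ℝ u) (fderiv ℝ (fderiv ℝ u) p) p := hdfu.hasFDerivAt
  set U := fderiv ℝ (fderiv ℝ u) p with hUdef
  have husymm : U ((1:ℝ),(0:ℝ)) ((0:ℝ),(1:ℝ)) = U ((0:ℝ),(1:ℝ)) ((1:ℝ),(0:ℝ)) :=
    second_derivative_symmetric_of_eventually hu' hu'' _ _
  have hpxu : HasFDerivAt (px u) (L10.comp U) p :=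
    ((L10.hasFDerivAt.comp p hu'')).congr_of_eventuallyEq
      (Filter.Eventually.of_forall fun q => rfl)
  have hpyu : HasFDerivAt (py u) (L01.comp U) p :=
    ((L01.hasFDerivAt.comp p hu'')).congr_of_eventuallyEq
      (Filter.Eventually.of_forall fun q => rfl)
  -- quotient derivative functions matching the twin relations
  have hWinv : HasFDerivAt (fun q => (omegT v q)⁻¹)
      ((-(omegT v p ^ 2)⁻¹) • fderiv ℝ (omegT v) p) p := by
    have h := (hasDerivAt_inv hWne).comp_hasFDerivAt p hdo.hasFDerivAt
    exact h.congr_of_eventuallyEq (Filter.Eventually.of_forall fun q => rfl)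
  have htw1 : px u =ᶠ[𝓝 p] fun q => py v q * (omegT v q)⁻¹ - τ * q.2 := by
    filter_upwards [hmem] with q hq
    rw [htwinx q hq]; ring
  have htw2 : py u =ᶠ[𝓝 p] fun q => -(px v q * (omegT v q)⁻¹) + τ * q.1 := by
    filter_upwards [hmem] with q hq
    rw [htwiny q hq]; ring
  have hA : HasFDerivAt (fun q : ℝ × ℝ => py v q * (omegT v q)⁻¹ - τ * q.2)
      ((py v p • ((-(omegT v p ^ 2)⁻¹) • fderiv ℝ (omegT v) p)
         + (omegT v p)⁻¹ • (L01.comp F)) - τ • ContinuousLinearMap.snd ℝ ℝ ℝ) p := by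
    have h := (hpy.mul hWinv).sub (hasFDerivAt_snd.const_mul τ)
    exact h.congr_of_eventuallyEq (Filter.Eventually.of_forall fun q => rfl)
  have hB : HasFDerivAt (fun q : ℝ × ℝ => -(px v q * (omegT v q)⁻¹) + τ * q.1)
      ((-(px v p • ((-(omegT v p ^ 2)⁻¹) • fderiv ℝ (omegT v) p)
         + (omegT v p)⁻¹ • (L10.comp F))) + τ • ContinuousLinearMap.fst ℝ ℝ ℝ) p := by
    have h := ((hpx.mul hWinv).neg).add (hasFDerivAt_fst.const_mul τ)
    exact h.congr_of_eventuallyEq (Filter.Eventually.of_forall fun q => rfl)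
  have hCMC1 : L10.comp U = (py v p • ((-(omegT v p ^ 2)⁻¹) • fderiv ℝ (omegT v) p)
         + (omegT v p)⁻¹ • (L01.comp F)) - τ • ContinuousLinearMap.snd ℝ ℝ ℝ :=
    hpxu.fderiv.symm.trans (htw1.fderiv_eq.trans hA.fderiv)
  have hCMC2 : L01.comp U = (-(px v p • ((-(omegT v p ^ 2)⁻¹) • fderiv ℝ (omegT v) p)
         + (omegT v p)⁻¹ • (L10.comp F))) + τ • ContinuousLinearMap.fst ℝ ℝ ℝ :=
    hpyu.fderiv.symm.trans (htw2.fderiv_eq.trans hB.fderiv)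
  have e3 := congrArg (fun L : (ℝ × ℝ) →L[ℝ] ℝ => L ((0:ℝ),(1:ℝ))) hCMC1
  have e4 := congrArg (fun L : (ℝ × ℝ) →L[ℝ] ℝ => L ((1:ℝ),(0:ℝ))) hCMC2
  simp only [ContinuousLinearMap.smul_apply, ContinuousLinearMap.sub_apply,
    ContinuousLinearMap.add_apply, ContinuousLinearMap.comp_apply,
    ContinuousLinearMap.apply_apply, ContinuousLinearMap.neg_apply,
    ContinuousLinearMap.coe_snd', ContinuousLinearMap.coe_fst', smul_eq_mul,
    hDx, hDy, hL10, hL01] at e3 e4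
  have hs2 : F ((0:ℝ),(1:ℝ)) ((1:ℝ),(0:ℝ)) = F ((1:ℝ),(0:ℝ)) ((0:ℝ),(1:ℝ)) := hsymm _ _
  have hcmc := e4.symm.trans (husymm.trans e3)
  rw [hs2] at hcmc
  have hE : F ((1:ℝ),(0:ℝ)) ((1:ℝ),(0:ℝ)) * (omegT v p ^ 2 + px v p ^ 2)
      + 2 * px v p * py v p * F ((1:ℝ),(0:ℝ)) ((0:ℝ),(1:ℝ))
      + F ((0:ℝ),(1:ℝ)) ((0:ℝ),(1:ℝ)) * (omegT v p ^ 2 + py v p ^ 2)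
      = 2 * τ * omegT v p ^ 3 := by
    field_simp at hcmc
    refine mul_left_cancel₀ hWne ?_
    linear_combination -(omegT v p) * hcmc
  -- values of second derivatives of v
  have hx1 : px (px v) p = F ((1:ℝ),(0:ℝ)) ((1:ℝ),(0:ℝ)) := by
    show fderiv ℝ (px v) p ((1:ℝ),(0:ℝ)) = _
    rw [hpx.fderiv]
    simp [hL10, ContinuousLinearMap.comp_apply, ContinuousLinearMap.apply_apply]
  have hx2 : py (px v) p = F ((1:ℝ),(0:ℝ)) ((0:ℝ),(1:ℝ)) := by
    show fderiv ℝ (px v) p ((0:ℝ),(1:ℝ)) = _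
    rw [hpx.fderiv]
    simp [hL10, ContinuousLinearMap.comp_apply, ContinuousLinearMap.apply_apply]
    exact hsymm _ _
  have hx3 : py (py v) p = F ((0:ℝ),(1:ℝ)) ((0:ℝ),(1:ℝ)) := by
    show fderiv ℝ (py v) p ((0:ℝ),(1:ℝ)) = _
    rw [hpy.fderiv]
    simp [hL01, ContinuousLinearMap.comp_apply, ContinuousLinearMap.apply_apply]
  have hKT : gaussKT v p
      = ((F ((1:ℝ),(0:ℝ)) ((0:ℝ),(1:ℝ)))^2
          - F ((1:ℝ),(0:ℝ)) ((1:ℝ),(0:ℝ)) * F ((0:ℝ),(1:ℝ)) ((0:ℝ),(1:ℝ))) / (omegT v p)^4 := by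
    rw [gaussKT, hx1, hx2, hx3]
  exact final_ineq (px v p) (py v p) (F ((1:ℝ),(0:ℝ)) ((1:ℝ),(0:ℝ)))
    (F ((1:ℝ),(0:ℝ)) ((0:ℝ),(1:ℝ))) (F ((0:ℝ),(1:ℝ)) ((0:ℝ),(1:ℝ))) (omegT v p) τ
    (gradNuSq τ u p) (nuF τ u p) (gaussKT v p) (alph τ u p) (bet τ u p) (omeg τ u p)
    (px (nuF τ u) p) (py (nuF τ u) p) hab hWp hW2 hE
    (halph p hp) (hbet p hp) (homeg p hp) (hnuq p hp) hnx hny hKT rfl
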